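/- arXiv:2411.12717 — 2 statements merged into one kernel-verified Lean document; each statement's English description precedes it below -/
import Mathlib

section
/- Let h : [0,∞) → [0,∞) be continuous with h(0) = 0. For all s,t ≥ 0, the following are equivalent: (i) m_h(s,t) = h(s) (the metric characterization that p_h(s) is an ancestor of p_h(t) in the tree coded by h); (ii) 𝔤_h(s) ≤ 𝔤_h(t) and 𝔤_h(t) ≤ D_h(s), where D_h(s) := inf{q > 𝔤_h(s) : h(q) < h(s)} ∈ [0,∞] (with inf ∅ = ∞). (D_h(s) coincides with the last visit time 𝔡 of the point p_h(s) whenever it is finite.) -/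
open Set Filter Topology
open scoped NNReal ENNReal

noncomputable section

namespace TreePaper

/-- `mh h s t` is the minimum of `h` over `[min s t, max s t]`. -/
def mh (h : ℝ≥0 → ℝ≥0) (s t : ℝ≥0) : ℝ≥0 :=
  sInf (h '' Set.Icc (min s t) (max s t))

/-- The tree pseudo-distance `d_h(s,t) = h(s) + h(t) - 2 m_h(s,t)`. -/
def dh (h : ℝ≥0 → ℝ≥0) (s t : ℝ≥0) : ℝ :=
  (h s : ℝ) + (h t : ℝ) - 2 * (mh h s t : ℝ)

/-- `𝔤_h(s)`, the first time at which the point coded by `s` is visited. -/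
def gh (h : ℝ≥0 → ℝ≥0) (s : ℝ≥0) : ℝ≥0 :=
  sInf {q : ℝ≥0 | dh h q s = 0}

/-- `D_h(s) = inf {q > 𝔤_h(s) : h(q) < h(s)} ∈ [0,∞]` (with `inf ∅ = ∞`). -/
def Dh (h : ℝ≥0 → ℝ≥0) (s : ℝ≥0) : ℝ≥0∞ :=
  sInf ((fun q : ℝ≥0 => (q : ℝ≥0∞)) '' {q : ℝ≥0 | gh h s < q ∧ h q < h s})

variable {h : ℝ≥0 → ℝ≥0}

lemma mh_le_left (h : ℝ≥0 → ℝ≥0) (s t : ℝ≥0) : mh h s t ≤ h s :=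
  csInf_le (OrderBot.bddBelow _) ⟨s, ⟨min_le_left s t, le_max_left s t⟩, rfl⟩

lemma mh_le_right (h : ℝ≥0 → ℝ≥0) (s t : ℝ≥0) : mh h s t ≤ h t :=
  csInf_le (OrderBot.bddBelow _) ⟨t, ⟨min_le_right s t, le_max_right s t⟩, rfl⟩

lemma mh_eq_left_iff (h : ℝ≥0 → ℝ≥0) (s t : ℝ≥0) :
    mh h s t = h s ↔ ∀ r ∈ Icc (min s t) (max s t), h s ≤ h r := by
  constructor
  · intro he r hr
    rw [← he]
    exact csInf_le (OrderBot.bddBelow _) ⟨r, hr, rfl⟩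
  · intro H
    refine le_antisymm (mh_le_left h s t) ?_
    refine le_csInf ⟨h s, s, ⟨min_le_left s t, le_max_left s t⟩, rfl⟩ ?_
    rintro b ⟨r, hr, rfl⟩
    exact H r hr

lemma dh_eq_zero_iff (h : ℝ≥0 → ℝ≥0) (q s : ℝ≥0) :
    dh h q s = 0 ↔ h q = h s ∧ ∀ r ∈ Icc (min q s) (max q s), h s ≤ h r := by
  have h1 : (mh h q s : ℝ) ≤ h q := NNReal.coe_le_coe.mpr (mh_le_left h q s)
  have h2 : (mh h q s : ℝ) ≤ h s := NNReal.coe_le_coe.mpr (mh_le_right h q s)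
  constructor
  · intro hz
    have hz' : (h q : ℝ) + h s - 2 * mh h q s = 0 := hz
    have e1 : (h q : ℝ) = mh h q s := by linarith
    have e2 : (h s : ℝ) = mh h q s := by linarith
    have hqs : h q = h s := NNReal.coe_injective (by linarith)
    refine ⟨hqs, ?_⟩
    intro r hr
    have : (mh h q s : ℝ) ≤ h r :=
      NNReal.coe_le_coe.mpr (csInf_le (OrderBot.bddBelow _) ⟨r, hr, rfl⟩)
    exact NNReal.coe_le_coe.mp (by linarith)
  · rintro ⟨hqs, H⟩
    have hm : mh h q s = h s := by
      refine le_antisymm (mh_le_right h q s) ?_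
      refine le_csInf ⟨h q, q, ⟨min_le_left q s, le_max_left q s⟩, rfl⟩ ?_
      rintro b ⟨r, hr, rfl⟩
      exact H r hr
    show (h q : ℝ) + h s - 2 * mh h q s = 0
    rw [hqs, hm]; ring

lemma dh_self (h : ℝ≥0 → ℝ≥0) (s : ℝ≥0) : dh h s s = 0 := by
  rw [dh_eq_zero_iff]
  refine ⟨rfl, ?_⟩
  intro r hr
  simp only [min_self, max_self, Icc_self, mem_singleton_iff] at hr
  rw [hr]

lemma gh_le_self (h : ℝ≥0 → ℝ≥0) (s : ℝ≥0) : gh h s ≤ s :=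
  csInf_le (OrderBot.bddBelow _) (dh_self h s)

lemma exists_between_lt (hcont : Continuous h) {a b c : ℝ≥0} (hab : a < b) (hb : h b < c) :
    ∃ q, a < q ∧ q < b ∧ h q < c := by
  have hb' : b ∈ closure (Ioo a b) := by
    rw [closure_Ioo hab.ne]; exact ⟨hab.le, le_rfl⟩
  haveI := mem_closure_iff_nhdsWithin_neBot.mp hb'
  have hev : ∀ᶠ q in 𝓝[Ioo a b] b, h q < c :=
    mem_nhdsWithin_of_mem_nhds ((isOpen_lt hcont continuous_const).mem_nhds hb)
  obtain ⟨q, hq1, hq2⟩ := (hev.and eventually_mem_nhdsWithin).exists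
  exact ⟨q, hq2.1, hq2.2, hq1⟩

lemma le_of_right_limit (hcont : Continuous h) {a b c : ℝ≥0} (hab : a < b)
    (H : ∀ r ∈ Ioc a b, c ≤ h r) : c ≤ h a := by
  have ha : a ∈ closure (Ioc a b) := by
    rw [closure_Ioc hab.ne]; exact ⟨le_rfl, hab.le⟩
  haveI := mem_closure_iff_nhdsWithin_neBot.mp ha
  exact ge_of_tendsto ((hcont.tendsto a).mono_left nhdsWithin_le_nhds)
    (eventually_mem_nhdsWithin.mono fun r hr => H r hr)

lemma dh_gh (hcont : Continuous h) (s : ℝ≥0) : dh h (gh h s) s = 0 := by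
  have hsS : dh h s s = 0 := dh_self h s
  have hne : {q : ℝ≥0 | dh h q s = 0}.Nonempty := ⟨s, hsS⟩
  have hcl : gh h s ∈ closure {q : ℝ≥0 | dh h q s = 0} :=
    csInf_mem_closure hne (OrderBot.bddBelow _)
  haveI := mem_closure_iff_nhdsWithin_neBot.mp hcl
  have hgle : gh h s ≤ s := gh_le_self h s
  have heq : h (gh h s) = h s := by
    have t1 : Tendsto h (𝓝[{q : ℝ≥0 | dh h q s = 0}] (gh h s)) (𝓝 (h (gh h s))) :=
      (hcont.tendsto _).mono_left nhdsWithin_le_nhds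
    have t2 : Tendsto h (𝓝[{q : ℝ≥0 | dh h q s = 0}] (gh h s)) (𝓝 (h s)) := by
      refine Tendsto.congr' ?_ tendsto_const_nhds
      exact eventually_mem_nhdsWithin.mono fun q hq => ((dh_eq_zero_iff h q s).mp hq).1.symm
    exact tendsto_nhds_unique t1 t2
  rw [dh_eq_zero_iff]
  refine ⟨heq, ?_⟩
  intro r hr
  rw [min_eq_left hgle, max_eq_right hgle] at hr
  rcases eq_or_lt_of_le hr.1 with he | hlt
  · rw [← he, heq]
  · obtain ⟨q, hqS, hq⟩ := exists_lt_of_csInf_lt hne hlt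
    obtain ⟨hq_eq, hq_all⟩ := (dh_eq_zero_iff h q s).mp hqS
    have hqs : q ≤ s := hq.le.trans hr.2
    rw [min_eq_left hqs, max_eq_right hqs] at hq_all
    exact hq_all r ⟨hq.le, hr.2⟩

lemma gh_le_of_forall (hcont : Continuous h) (h0 : h 0 = 0) {a s : ℝ≥0} (has : a ≤ s)
    (H : ∀ r ∈ Icc a s, h s ≤ h r) : gh h s ≤ a := by
  set T := Iic a ∩ h ⁻¹' Iic (h s) with hT
  have hTcl : IsClosed T := isClosed_Iic.inter (isClosed_Iic.preimage hcont)
  have hT0 : (0:ℝ≥0) ∈ T := ⟨zero_le (a := a), by simp [h0]⟩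
  have hTbdd : BddAbove T := ⟨a, fun q hq => hq.1⟩
  have hqT : sSup T ∈ T := hTcl.csSup_mem ⟨0, hT0⟩ hTbdd
  set q := sSup T with hq
  have hqa : q ≤ a := hqT.1
  have hq_ge : h s ≤ h q := by
    rcases eq_or_lt_of_le hqa with he | hlt
    · rw [he]; exact H a ⟨le_rfl, has⟩
    · refine le_of_right_limit hcont hlt ?_
      intro r hr
      rcases eq_or_lt_of_le hr.2 with he | hra
      · rw [he]; exact H a ⟨le_rfl, has⟩
      · by_contra hcon
        push_neg at hcon
        exact absurd (le_csSup hTbdd ⟨hra.le, hcon.le⟩ : r ≤ q) (not_le.mpr hr.1)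
  have heq : h q = h s := le_antisymm hqT.2 hq_ge
  have hdq : dh h q s = 0 := by
    rw [dh_eq_zero_iff]
    refine ⟨heq, ?_⟩
    have hqs : q ≤ s := hqa.trans has
    intro r hr
    rw [min_eq_left hqs, max_eq_right hqs] at hr
    rcases le_or_gt a r with h1 | h2
    · exact H r ⟨h1, hr.2⟩
    · rcases eq_or_lt_of_le hr.1 with he | hlt
      · rw [← he, heq]
      · by_contra hcon
        push_neg at hcon
        exact absurd (le_csSup hTbdd ⟨h2.le, hcon.le⟩ : r ≤ q) (not_le.mpr hlt)
  have : gh h s ≤ q :=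
    csInf_le (OrderBot.bddBelow _) (show q ∈ {q : ℝ≥0 | dh h q s = 0} from hdq)
  exact this.trans hqa

/-- for a continuous `h` with `h(0) = 0`, `m_h(s,t) = h(s)` (ancestor relation)
holds if and only if `𝔤_h(s) ≤ 𝔤_h(t)` and `𝔤_h(t) ≤ D_h(s)`. -/
theorem statement5 (h : ℝ≥0 → ℝ≥0) (hcont : Continuous h) (h0 : h 0 = 0) (s t : ℝ≥0) :
    mh h s t = h s ↔ gh h s ≤ gh h t ∧ (gh h t : ℝ≥0∞) ≤ Dh h s := by
  obtain ⟨hgs_eq, hgs_all⟩ := (dh_eq_zero_iff h (gh h s) s).mp (dh_gh hcont s)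
  obtain ⟨hgt_eq, hgt_all⟩ := (dh_eq_zero_iff h (gh h t) t).mp (dh_gh hcont t)
  have hgs_le : gh h s ≤ s := gh_le_self h s
  have hgt_le : gh h t ≤ t := gh_le_self h t
  rw [min_eq_left hgs_le, max_eq_right hgs_le] at hgs_all
  rw [min_eq_left hgt_le, max_eq_right hgt_le] at hgt_all
  rw [mh_eq_left_iff]
  constructor
  · intro A
    have hts : h s ≤ h t := A t ⟨min_le_right s t, le_max_right s t⟩
    constructor
    · rcases le_total t s with hts' | hst'
      · refine gh_le_of_forall hcont h0 (hgt_le.trans hts') ?_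
        intro r hr
        rcases le_total r t with h1 | h2
        · exact hts.trans (hgt_all r ⟨hr.1, h1⟩)
        · exact A r ⟨(min_le_right s t).trans h2, hr.2.trans (le_max_left s t)⟩
      · rcases le_total s (gh h t) with h1 | h2
        · exact hgs_le.trans h1
        · refine gh_le_of_forall hcont h0 h2 ?_
          intro r hr
          exact hts.trans (hgt_all r ⟨hr.1, hr.2.trans hst'⟩)
    · refine le_sInf ?_
      rintro x ⟨q, ⟨hq1, hq2⟩, rfl⟩
      rw [ENNReal.coe_le_coe]
      by_contra hcon
      push_neg at hcon
      have h1 : q < min s t := by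
        by_contra h2
        push_neg at h2
        exact absurd (A q ⟨h2, (hcon.le.trans hgt_le).trans (le_max_right s t)⟩)
          (not_le.mpr hq2)
      exact absurd (hgs_all q ⟨hq1.le, h1.le.trans (min_le_left s t)⟩) (not_le.mpr hq2)
  · rintro ⟨h1, h2⟩ r hr
    by_contra hcon
    push_neg at hcon
    rcases le_total s t with hst | hts
    · rw [min_eq_left hst, max_eq_right hst] at hr
      have hgsr : gh h s ≤ r := hgs_le.trans hr.1
      rcases eq_or_lt_of_le hgsr with he | hlt
      · rw [← he, hgs_eq] at hcon
        exact absurd le_rfl (not_le.mpr hcon)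
      · have hDle : Dh h s ≤ (r : ℝ≥0∞) :=
          sInf_le ⟨r, ⟨hlt, hcon⟩, rfl⟩
        have hgtr : gh h t ≤ r := ENNReal.coe_le_coe.mp (h2.trans hDle)
        have hhtr : h t ≤ h r := hgt_all r ⟨hgtr, hr.2⟩
        have hht : h t < h s := lt_of_le_of_lt hhtr hcon
        rcases eq_or_lt_of_le h1 with he | hlt2
        · rw [← he, hgs_eq] at hgt_eq
          exact absurd hht (not_lt.mpr hgt_eq.le)
        · obtain ⟨q, hq1, hq2, hq3⟩ :=
            exists_between_lt hcont hlt2 (hgt_eq ▸ hht)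
          have hD : Dh h s ≤ (q : ℝ≥0∞) := sInf_le ⟨q, ⟨hq1, hq3⟩, rfl⟩
          exact absurd (ENNReal.coe_le_coe.mp (h2.trans hD)) (not_le.mpr hq2)
    · rw [min_eq_right hts, max_eq_left hts] at hr
      rcases le_or_gt (gh h s) r with hgr | hgr
      · exact absurd (hgs_all r ⟨hgr, hr.2⟩) (not_le.mpr hcon)
      · exact absurd ((hgt_le.trans hr.1).trans_lt (hgr.trans_le h1)) (lt_irrefl _)


end TreePaper
end
end

section
/- Let μ be a finite Borel measure on [0,∞) with total mass ⟨μ,1⟩, and for a ≥ 0 let κ_a μ denote the pruned measure, i.e. the unique Borel measure on [0,∞) satisfying κ_a μ([0,r]) = min( μ([0,r]), (⟨μ,1⟩ − a)⁺ ) for every r ≥ 0 (so κ_a μ = 0 when a ≥ ⟨μ,1⟩). Then: (i) such a measure κ_a μ exists and is unique; (ii) for every a > 0 the measure κ_a μ has compact support, even when the topological support of μ is unbounded; (iii) writing H(ν) := sup(supp ν) (with H(0) := 0), if μ has compact support and supp μ = [0, H(μ)], then the map a ↦ H(κ_a μ) is continuous on [0,∞). -/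
open MeasureTheory Set
open scoped NNReal ENNReal

noncomputable section

/-- The topological support of a measure on `[0,∞)`: points all of whose open neighbourhoods
have positive measure. -/
def msupport (κ : Measure ℝ≥0) : Set ℝ≥0 :=
  {x : ℝ≥0 | ∀ U : Set ℝ≥0, IsOpen U → x ∈ U → 0 < κ U}

/-- `H(κ) = sup (supp κ)`, with the convention `H(0) = 0` (`sSup ∅ = 0` in `ℝ≥0`). -/
noncomputable def Hsup (κ : Measure ℝ≥0) : ℝ≥0 := sSup (msupport κ)

section Aux

open Filter
open scoped Topology

lemma iUnion_Iic_nat : (⋃ n : ℕ, Iic ((n : ℝ≥0))) = (univ : Set ℝ≥0) := by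
  ext x
  simp only [mem_iUnion, mem_Iic, mem_univ, iff_true]
  exact ⟨⌈x⌉₊, by exact_mod_cast Nat.le_ceil x⟩

lemma univ_eq_iSup (κ : Measure ℝ≥0) : κ univ = ⨆ n : ℕ, κ (Iic ((n : ℝ≥0))) := by
  rw [← iUnion_Iic_nat]
  exact Monotone.measure_iUnion (fun i j hij => Iic_subset_Iic.2 (by exact_mod_cast hij))

lemma prune_univ {μ κ : Measure ℝ≥0} {c : ℝ≥0∞}
    (hκ : ∀ r : ℝ≥0, κ (Iic r) = min (μ (Iic r)) c) :
    κ univ = min (μ univ) c := by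
  rw [univ_eq_iSup κ, univ_eq_iSup μ]
  calc (⨆ n : ℕ, κ (Iic ((n : ℝ≥0)))) = ⨆ n : ℕ, μ (Iic ((n : ℝ≥0))) ⊓ c := by
        exact iSup_congr fun n => hκ _
    _ = (⨆ n : ℕ, μ (Iic ((n : ℝ≥0)))) ⊓ c := (iSup_inf_eq _ _).symm
    _ = min (⨆ n : ℕ, μ (Iic ((n : ℝ≥0)))) c := rfl

/-- Right-continuity: the value of `μ (Iic ·)` at the `sInf` of a super-level set. -/
lemma le_measure_Iic_sInf (μ : Measure ℝ≥0) [IsFiniteMeasure μ] {c : ℝ≥0∞}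
    (hne : {r : ℝ≥0 | c ≤ μ (Iic r)}.Nonempty) :
    c ≤ μ (Iic (sInf {r : ℝ≥0 | c ≤ μ (Iic r)})) := by
  set S := {r : ℝ≥0 | c ≤ μ (Iic r)} with hS
  set t := sInf S with ht
  have key : ∀ n : ℕ, c ≤ μ (Iic (t + ((n : ℝ≥0) + 1)⁻¹)) := by
    intro n
    have hpos : (0 : ℝ≥0) < ((n : ℝ≥0) + 1)⁻¹ := by positivity
    have hlt : t < t + ((n : ℝ≥0) + 1)⁻¹ := lt_add_of_pos_right _ hpos
    obtain ⟨s, hsS, hst⟩ := (csInf_lt_iff (OrderBot.bddBelow S) hne).1 hlt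
    exact le_trans hsS (measure_mono (Iic_subset_Iic.2 hst.le))
  have hInter : (⋂ n : ℕ, Iic (t + ((n : ℝ≥0) + 1)⁻¹)) = Iic t := by
    ext x
    simp only [mem_iInter, mem_Iic]
    constructor
    · intro hx
      by_contra hxt
      push_neg at hxt
      obtain ⟨n, hn⟩ := exists_nat_gt (x - t)⁻¹
      have hxtpos : (0 : ℝ≥0) < x - t := tsub_pos_of_lt hxt
      have h1 : ((n : ℝ≥0) + 1)⁻¹ < x - t := by
        refine inv_lt_of_inv_lt₀ hxtpos ?_
        exact hn.trans (lt_add_of_pos_right _ zero_lt_one)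
      have h2 : t + ((n : ℝ≥0) + 1)⁻¹ < t + (x - t) := add_lt_add_right h1 t
      rw [add_tsub_cancel_of_le hxt.le] at h2
      exact absurd ((hx n).trans_lt h2) (lt_irrefl x)
    · intro hx n
      exact hx.trans (le_add_of_nonneg_right zero_le)
  have hdir : Directed (· ⊇ ·) (fun n : ℕ => Iic (t + ((n : ℝ≥0) + 1)⁻¹)) := by
    have hanti : Antitone (fun n : ℕ => Iic (t + ((n : ℝ≥0) + 1)⁻¹)) := by
      intro i j hij
      refine Iic_subset_Iic.2 (add_le_add_right ?_ t)
      gcongr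
    exact hanti.directed_ge
  rw [← hInter, Directed.measure_iInter
    (fun n => measurableSet_Iic.nullMeasurableSet) hdir ⟨0, measure_ne_top _ _⟩]
  exact le_iInf key

lemma prune_exists (μ : Measure ℝ≥0) [IsFiniteMeasure μ] (c : ℝ≥0∞) (hcm : c ≤ μ univ) :
    ∃ κ : Measure ℝ≥0, ∀ r : ℝ≥0, κ (Iic r) = min (μ (Iic r)) c := by
  rcases eq_or_ne c (μ univ) with hc | hc
  · exact ⟨μ, fun r => (min_eq_left (hc ▸ measure_mono (subset_univ _))).symm⟩
  rcases eq_or_ne c 0 with h0 | h0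
  · exact ⟨0, fun r => by simp [h0]⟩
  have hlt : c < μ univ := hcm.lt_of_ne hc
  have hiSup := univ_eq_iSup μ
  obtain ⟨R, hR⟩ : ∃ R : ℝ≥0, c ≤ μ (Iic R) := by
    rw [hiSup] at hlt
    obtain ⟨n, hn⟩ := lt_iSup_iff.1 hlt
    exact ⟨n, hn.le⟩
  set S := {r : ℝ≥0 | c ≤ μ (Iic r)} with hSdef
  have hSne : S.Nonempty := ⟨R, hR⟩
  set t := sInf S with htdef
  have htS : c ≤ μ (Iic t) := le_measure_Iic_sInf μ hSne
  have hnotS : ∀ {r : ℝ≥0}, r < t → μ (Iic r) < c := by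
    intro r hr
    by_contra hcon
    push_neg at hcon
    exact absurd (csInf_le (OrderBot.bddBelow S) hcon) hr.not_ge
  have hIio : μ (Iio t) ≤ c := by
    rcases eq_or_ne t 0 with ht0 | ht0
    · rw [ht0]
      rw [show (Iio (0 : ℝ≥0)) = ∅ from Set.Iio_bot]
      simp
    obtain ⟨u, hu_mono, hu_mem, hu_tend⟩ :=
      exists_seq_strictMono_tendsto' (pos_iff_ne_zero.2 ht0)
    have hUnion : (⋃ n : ℕ, Iic (u n)) = Iio t := by
      ext x
      simp only [mem_iUnion, mem_Iic, mem_Iio]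
      constructor
      · rintro ⟨n, hn⟩; exact hn.trans_lt (hu_mem n).2
      · intro hx
        obtain ⟨n, hn⟩ := (hu_tend.eventually (eventually_gt_nhds hx)).exists
        exact ⟨n, hn.le⟩
    rw [← hUnion, Monotone.measure_iUnion (fun i j hij => Iic_subset_Iic.2 (hu_mono.monotone hij))]
    exact iSup_le fun n => (hnotS (hu_mem n).2).le
  refine ⟨μ.restrict (Iio t) + (c - μ (Iio t)) • Measure.dirac t, fun r => ?_⟩
  by_cases hr : r < t
  · have h1 : μ.restrict (Iio t) (Iic r) = μ (Iic r) := by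
      rw [Measure.restrict_apply measurableSet_Iic]
      congr 1
      rw [inter_eq_left]
      exact fun x hx => lt_of_le_of_lt hx hr
    have h2 : Measure.dirac t (Iic r) = 0 := by
      rw [Measure.dirac_apply' _ measurableSet_Iic]
      simp [indicator_of_notMem, hr.not_ge]
    simp only [Measure.coe_add, Pi.add_apply, Measure.coe_smul, Pi.smul_apply, smul_eq_mul, h1, h2,
      mul_zero, add_zero]
    exact (min_eq_left (hnotS hr).le).symm
  · push_neg at hr
    have h1 : μ.restrict (Iio t) (Iic r) = μ (Iio t) := by
      rw [Measure.restrict_apply measurableSet_Iic]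
      congr 1
      rw [inter_eq_right]
      exact fun x hx => (lt_of_lt_of_le hx hr).le
    have h2 : Measure.dirac t (Iic r) = 1 := by
      rw [Measure.dirac_apply' _ measurableSet_Iic]
      simp [indicator_of_mem, hr]
    simp only [Measure.coe_add, Pi.add_apply, Measure.coe_smul, Pi.smul_apply, smul_eq_mul, h1, h2,
      mul_one]
    rw [add_tsub_cancel_of_le hIio]
    exact (min_eq_right (htS.trans (measure_mono (Iic_subset_Iic.2 hr)))).symm

lemma prune_finite {μ κ : Measure ℝ≥0} [IsFiniteMeasure μ] {c : ℝ≥0∞}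
    (hκ : ∀ r : ℝ≥0, κ (Iic r) = min (μ (Iic r)) c) : IsFiniteMeasure κ := by
  constructor
  rw [prune_univ hκ]
  exact lt_of_le_of_lt (min_le_left _ _) (measure_lt_top μ _)

lemma prune_unique {μ κ₁ κ₂ : Measure ℝ≥0} [IsFiniteMeasure μ] {c : ℝ≥0∞}
    (h1 : ∀ r : ℝ≥0, κ₁ (Iic r) = min (μ (Iic r)) c)
    (h2 : ∀ r : ℝ≥0, κ₂ (Iic r) = min (μ (Iic r)) c) : κ₁ = κ₂ := by
  have := prune_finite h1
  exact Measure.ext_of_Iic κ₁ κ₂ (fun r => (h1 r).trans (h2 r).symm)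

lemma isClosed_msupport (κ : Measure ℝ≥0) : IsClosed (msupport κ) := by
  rw [← isOpen_compl_iff]
  rw [isOpen_iff_forall_mem_open]
  intro x hx
  simp only [msupport, mem_compl_iff, mem_setOf_eq, not_forall] at hx
  obtain ⟨U, hU, hxU, hU0⟩ := hx
  refine ⟨U, fun y hy hmem => ?_, hU, hxU⟩
  exact hU0 (hmem U hU hy)

lemma msupport_subset_Iic {κ : Measure ℝ≥0} {R : ℝ≥0} (h : κ (Ioi R) = 0) :
    msupport κ ⊆ Iic R := by
  intro x hx
  by_contra hxR
  rw [mem_Iic, not_le] at hxR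
  exact absurd (hx (Ioi R) isOpen_Ioi hxR) (by simp [h])

lemma Ioi_null_of_prune {μ κ : Measure ℝ≥0} [IsFiniteMeasure μ] {c : ℝ≥0∞} {R : ℝ≥0}
    (hκ : ∀ r : ℝ≥0, κ (Iic r) = min (μ (Iic r)) c) (hcm : c ≤ μ univ) (hR : c ≤ μ (Iic R)) :
    κ (Ioi R) = 0 := by
  have huniv : κ univ = c := by rw [prune_univ hκ]; exact min_eq_right hcm
  have hIic : κ (Iic R) = c := by rw [hκ R]; exact min_eq_right hR
  have hadd := measure_add_measure_compl (μ := κ) (measurableSet_Iic (a := R))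
  rw [compl_Iic, hIic, huniv] at hadd
  have hct : c ≠ ⊤ := (hcm.trans_lt (measure_lt_top μ _)).ne
  calc κ (Ioi R) = c + κ (Ioi R) - c := (ENNReal.add_sub_cancel_left hct).symm
    _ = c - c := by rw [hadd]
    _ = 0 := tsub_self c

lemma part2 (μ : Measure ℝ≥0) [IsFiniteMeasure μ] (a : ℝ≥0) (ha : 0 < a) (κ : Measure ℝ≥0)
    (hκ : ∀ r : ℝ≥0, κ (Iic r) = min (μ (Iic r)) (μ univ - (a : ℝ≥0∞))) :
    IsCompact (msupport κ) := by
  set c := μ univ - (a : ℝ≥0∞) with hc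
  have hcm : c ≤ μ univ := tsub_le_self
  have hclt : c < μ univ ∨ μ univ = 0 := by
    rcases eq_or_ne (μ univ) 0 with h | h
    · exact Or.inr h
    · left
      refine ENNReal.sub_lt_self (measure_ne_top μ _) h ?_
      exact_mod_cast ha.ne'
  obtain ⟨R, hR⟩ : ∃ R : ℝ≥0, c ≤ μ (Iic R) := by
    rcases hclt with h | h
    · rw [univ_eq_iSup μ] at h
      obtain ⟨n, hn⟩ := lt_iSup_iff.1 h
      exact ⟨n, hn.le⟩
    · exact ⟨0, by simp [hc, h]⟩
  have hsub := msupport_subset_Iic (Ioi_null_of_prune hκ hcm hR)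
  have hIic : IsCompact (Iic R) := by
    have : Iic R = Icc 0 R := (Icc_bot).symm
    rw [this]
    exact isCompact_Icc
  exact hIic.of_isClosed_subset (isClosed_msupport κ) hsub

lemma null_compl_msupport (κ : Measure ℝ≥0) : κ (msupport κ)ᶜ = 0 := by
  refine measure_null_of_locally_null _ (fun x hx => ?_)
  simp only [msupport, mem_compl_iff, mem_setOf_eq, not_forall] at hx
  obtain ⟨U, hU, hxU, hU0⟩ := hx
  exact ⟨U, mem_nhdsWithin_of_mem_nhds (hU.mem_nhds hxU), le_zero_iff.1 (not_lt.1 hU0)⟩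

lemma part3 (μ : Measure ℝ≥0) [IsFiniteMeasure μ]
    (hsupp : msupport μ = Iic (Hsup μ))
    (K : ℝ≥0 → Measure ℝ≥0)
    (hK : ∀ a r : ℝ≥0, K a (Iic r) = min (μ (Iic r)) (μ univ - (a : ℝ≥0∞))) :
    Continuous fun a : ℝ≥0 => Hsup (K a) := by
  have hIoi : μ (Ioi (Hsup μ)) = 0 := by
    rw [← compl_Iic, ← hsupp]
    exact null_compl_msupport μ
  have hFh : μ (Iic (Hsup μ)) = μ univ := by
    have := measure_add_measure_compl (μ := μ) (measurableSet_Iic (a := Hsup μ))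
    rwa [compl_Iic, hIoi, add_zero] at this
  have hstrict : ∀ r s : ℝ≥0, r < s → s ≤ Hsup μ → μ (Iic r) < μ (Iic s) := by
    intro r s hrs hsh
    obtain ⟨w, hw1, hw2⟩ := exists_between hrs
    have hw : w ∈ msupport μ := by rw [hsupp]; exact mem_Iic.2 (hw2.le.trans hsh)
    have hpos : 0 < μ (Ioo r s) := hw _ isOpen_Ioo ⟨hw1, hw2⟩
    have hdisj : Disjoint (Iic r) (Ioo r s) := by
      rw [disjoint_left]; intro x hx hx2; exact absurd hx2.1 (not_lt.2 hx)
    calc μ (Iic r) < μ (Iic r) + μ (Ioo r s) := ENNReal.lt_add_right (measure_ne_top μ _) hpos.ne'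
      _ = μ (Iic r ∪ Ioo r s) := (measure_union hdisj measurableSet_Ioo).symm
      _ ≤ μ (Iic s) := measure_mono (union_subset (Iic_subset_Iic.2 hrs.le) (fun x hx => hx.2.le))
  have hSne : ∀ a : ℝ≥0, Hsup μ ∈ {r : ℝ≥0 | μ univ - (a : ℝ≥0∞) ≤ μ (Iic r)} := by
    intro a
    rw [mem_setOf_eq, hFh]
    exact tsub_le_self
  have hTle : ∀ a : ℝ≥0, sInf {r : ℝ≥0 | μ univ - (a : ℝ≥0∞) ≤ μ (Iic r)} ≤ Hsup μ :=
    fun a => csInf_le (OrderBot.bddBelow _) (hSne a)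
  have hTanti : Antitone (fun a : ℝ≥0 => sInf {r : ℝ≥0 | μ univ - (a : ℝ≥0∞) ≤ μ (Iic r)}) := by
    intro a b hab
    refine csInf_le_csInf (OrderBot.bddBelow _) ⟨Hsup μ, hSne a⟩ (fun r hr => ?_)
    exact le_trans (tsub_le_tsub_left (by exact_mod_cast hab) (μ univ)) hr
  -- Step A : `Hsup (K a)` is the generalized inverse of the CDF of `μ`.
  have key : ∀ a : ℝ≥0,
      Hsup (K a) = sInf {r : ℝ≥0 | μ univ - (a : ℝ≥0∞) ≤ μ (Iic r)} := by
    intro a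
    set c := μ univ - (a : ℝ≥0∞) with hc
    set S := {r : ℝ≥0 | c ≤ μ (Iic r)} with hSdef
    have hSne' : S.Nonempty := ⟨Hsup μ, hSne a⟩
    rcases eq_or_ne c 0 with h0 | h0
    · have hT0 : sInf S = 0 :=
        le_antisymm (csInf_le (OrderBot.bddBelow _) (by simp [hSdef, h0])) zero_le
      have hKuniv : K a univ = 0 := by
        rw [prune_univ (hK a), ← hc, h0]
        simp
      have hemp : msupport (K a) = ∅ := by
        ext x
        simp only [msupport, mem_setOf_eq, mem_empty_iff_false, iff_false, not_forall]
        refine ⟨univ, isOpen_univ, mem_univ x, ?_⟩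
        rw [show K a univ = 0 from hKuniv]
        exact lt_irrefl 0
      rw [Hsup, hemp, csSup_empty, hT0]
      rfl
    · have htS : c ≤ μ (Iic (sInf S)) := le_measure_Iic_sInf μ hSne'
      have hcm : c ≤ μ univ := tsub_le_self
      have hKIoi : K a (Ioi (sInf S)) = 0 := Ioi_null_of_prune (hK a) hcm htS
      have hsub : msupport (K a) ⊆ Iic (sInf S) := msupport_subset_Iic hKIoi
      refine le_antisymm (csSup_le' hsub) (le_of_forall_lt fun s hst => ?_)
      have hFs : μ (Iic s) < c := by
        by_contra hcon
        push_neg at hcon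
        exact absurd (csInf_le (OrderBot.bddBelow S) hcon) hst.not_ge
      have hsplit : K a (Iic s) + K a (Ioc s (sInf S)) = K a (Iic (sInf S)) := by
        rw [← measure_union (Iic_disjoint_Ioc le_rfl) measurableSet_Ioc,
          Iic_union_Ioc_eq_Iic hst.le]
      have hKt : K a (Iic (sInf S)) = c := by rw [hK a]; exact min_eq_right htS
      have hKs : K a (Iic s) = μ (Iic s) := by rw [hK a]; exact min_eq_left hFs.le
      have hne0 : K a (Ioc s (sInf S)) ≠ 0 := by
        intro hcon
        rw [hcon, add_zero, hKs, hKt] at hsplit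
        exact absurd hsplit hFs.ne
      obtain ⟨x, hxIoc, hx⟩ := exists_mem_forall_mem_nhdsWithin_pos_measure hne0
      have hxsupp : x ∈ msupport (K a) := fun U hU hxU =>
        hx U (mem_nhdsWithin_of_mem_nhds (hU.mem_nhds hxU))
      exact lt_of_lt_of_le hxIoc.1 (le_csSup ⟨sInf S, fun y hy => hsub hy⟩ hxsupp)
  -- Step B : continuity of the generalized inverse
  have hcont : Continuous (fun a : ℝ≥0 => sInf {r : ℝ≥0 | μ univ - (a : ℝ≥0∞) ≤ μ (Iic r)}) := by
    rcases eq_or_ne (μ univ) 0 with hm0 | hm0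
    · have : (fun a : ℝ≥0 => sInf {r : ℝ≥0 | μ univ - (a : ℝ≥0∞) ≤ μ (Iic r)})
          = fun _ => 0 := by
        funext a
        refine le_antisymm (csInf_le (OrderBot.bddBelow _) ?_) zero_le
        simp [hm0]
      rw [this]; exact continuous_const
    rw [continuous_iff_continuousAt]
    intro a₀
    rw [ContinuousAt]
    refine tendsto_order.2 ⟨?_, ?_⟩
    · -- values stay above any `l` below the limit
      intro l hl
      obtain ⟨l', hl1, hl2⟩ := exists_between hl
      have hFl' : μ (Iic l') < μ univ - (a₀ : ℝ≥0∞) := by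
        by_contra hcon
        push_neg at hcon
        exact absurd (csInf_le (OrderBot.bddBelow _)
          (show l' ∈ {r : ℝ≥0 | μ univ - (a₀ : ℝ≥0∞) ≤ μ (Iic r)} from hcon)) hl2.not_ge
      have hdne : μ univ - μ (Iic l') ≠ ⊤ := (tsub_le_self.trans_lt (measure_lt_top μ _)).ne
      have hkey : (a₀ : ℝ≥0∞) < μ univ - μ (Iic l') := by
        rw [lt_tsub_iff_right]
        rw [lt_tsub_iff_left] at hFl'
        exact hFl'
      have ha₀d : a₀ < (μ univ - μ (Iic l')).toNNReal := by
        rw [← ENNReal.coe_lt_coe, ENNReal.coe_toNNReal hdne]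
        exact hkey
      filter_upwards [IsOpen.mem_nhds isOpen_Iio ha₀d] with a ha
      have ha' : (a : ℝ≥0∞) < μ univ - μ (Iic l') := by
        rw [← ENNReal.coe_toNNReal hdne]
        exact_mod_cast ha
      have hFl'a : μ (Iic l') < μ univ - (a : ℝ≥0∞) := by
        rw [lt_tsub_iff_left]
        rw [lt_tsub_iff_right] at ha'
        exact ha'
      have hle : l' ≤ sInf {r : ℝ≥0 | μ univ - (a : ℝ≥0∞) ≤ μ (Iic r)} := by
        refine le_csInf ⟨Hsup μ, hSne a⟩ (fun r hr => ?_)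
        by_contra hrl
        push_neg at hrl
        exact absurd (hr.trans (measure_mono (Iic_subset_Iic.2 hrl.le))) hFl'a.not_ge
      exact lt_of_lt_of_le hl1 hle
    · -- values stay below any `u` above the limit
      intro u hu
      by_cases hhu : Hsup μ < u
      · exact Eventually.of_forall (fun a => lt_of_le_of_lt (hTle a) hhu)
      push_neg at hhu
      by_cases ha₀ : a₀ = 0
      · refine Eventually.of_forall (fun a => lt_of_le_of_lt ?_ hu)
        exact hTanti (ha₀ ▸ (zero_le : (0 : ℝ≥0) ≤ a))
      obtain ⟨v, hv1, hv2⟩ := exists_between hu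
      have hvh : v ≤ Hsup μ := (hv2.trans_le hhu).le
      have hFt : μ univ - (a₀ : ℝ≥0∞)
          ≤ μ (Iic (sInf {r : ℝ≥0 | μ univ - (a₀ : ℝ≥0∞) ≤ μ (Iic r)})) :=
        le_measure_Iic_sInf μ ⟨Hsup μ, hSne a₀⟩
      have hFv : μ univ - (a₀ : ℝ≥0∞) < μ (Iic v) := lt_of_le_of_lt hFt (hstrict _ _ hv1 hvh)
      have hvm : μ (Iic v) ≤ μ univ := measure_mono (subset_univ _)
      have hkey : μ univ - μ (Iic v) < (a₀ : ℝ≥0∞) := by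
        rcases le_or_gt (a₀ : ℝ≥0∞) (μ univ) with hle | hlt'
        · rw [ENNReal.sub_lt_iff_lt_right (measure_ne_top μ _) hvm]
          rw [ENNReal.sub_lt_iff_lt_right ENNReal.coe_ne_top hle] at hFv
          rwa [add_comm] at hFv
        · exact lt_of_le_of_lt tsub_le_self hlt'
      have hdne : μ univ - μ (Iic v) ≠ ⊤ := (tsub_le_self.trans_lt (measure_lt_top μ _)).ne
      have hd : (μ univ - μ (Iic v)).toNNReal < a₀ := by
        rw [← ENNReal.coe_lt_coe, ENNReal.coe_toNNReal hdne]
        exact hkey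
      filter_upwards [IsOpen.mem_nhds isOpen_Ioi hd] with a ha
      have ha' : μ univ - μ (Iic v) < (a : ℝ≥0∞) := by
        rw [← ENNReal.coe_toNNReal hdne]
        exact_mod_cast ha
      have hmem : μ univ - (a : ℝ≥0∞) ≤ μ (Iic v) := by
        rw [tsub_le_iff_right]
        rw [ENNReal.sub_lt_iff_lt_right (measure_ne_top μ _) hvm] at ha'
        exact le_of_lt (by rwa [add_comm] at ha')
      exact lt_of_le_of_lt (csInf_le (OrderBot.bddBelow _) hmem) hv2
  have heq : (fun a : ℝ≥0 => Hsup (K a))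
      = fun a : ℝ≥0 => sInf {r : ℝ≥0 | μ univ - (a : ℝ≥0∞) ≤ μ (Iic r)} := funext key
  rw [heq]
  exact hcont

end Aux

/-- Statement 12: for a finite Borel measure `μ` on `[0,∞)` and the pruning operation `κ_a`,
characterized by `κ_a μ([0,r]) = min(μ([0,r]), (⟨μ,1⟩ - a)⁺)`:
(i) `κ_a μ` exists and is unique; (ii) for `a > 0` it has compact support;
(iii) if `μ` has compact support and `supp μ = [0, H(μ)]` then `a ↦ H(κ_a μ)` is continuous. -/
theorem statement12 (μ : Measure ℝ≥0) [IsFiniteMeasure μ] :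
    (∀ a : ℝ≥0, ∃! κ : Measure ℝ≥0,
        ∀ r : ℝ≥0, κ (Set.Iic r) = min (μ (Set.Iic r)) (μ Set.univ - (a : ℝ≥0∞))) ∧
    (∀ a : ℝ≥0, 0 < a → ∀ κ : Measure ℝ≥0,
        (∀ r : ℝ≥0, κ (Set.Iic r) = min (μ (Set.Iic r)) (μ Set.univ - (a : ℝ≥0∞))) →
        IsCompact (msupport κ)) ∧
    (IsCompact (msupport μ) → msupport μ = Set.Iic (Hsup μ) →
      ∀ K : ℝ≥0 → Measure ℝ≥0,
        (∀ a r : ℝ≥0, K a (Set.Iic r) = min (μ (Set.Iic r)) (μ Set.univ - (a : ℝ≥0∞))) →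
        Continuous fun a : ℝ≥0 => Hsup (K a)) := by
  refine ⟨?_, ?_, ?_⟩
  · intro a
    obtain ⟨κ, hκ⟩ := prune_exists μ (μ univ - (a : ℝ≥0∞)) tsub_le_self
    exact ⟨κ, hκ, fun κ' h' => prune_unique h' hκ⟩
  · intro a ha κ hκ
    exact part2 μ a ha κ hκ
  · intro _ hsupp K hK
    exact part3 μ hsupp K hK

end
end
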